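/- arXiv:1004.0623 — 4 statements merged into one kernel-verified Lean document; each statement's English description precedes it below -/
import Mathlib

section
/- Let E = (E^0, E^1, r, s) be a topological graph, let v, w ∈ E^0, and let x ∈ C_c(E^1) satisfy supp(x) ∩ E^1_{v,w} = ∅. Then there exist functions g_1, g_2 ∈ C_0(E^0) with g_1(v) = 0 and g_2(w) = 0, and functions x_1, x_2 ∈ C_c(E^1), such that x(e) = g_1(r(e))·x_1(e) + x_2(e)·g_2(s(e)) for every e ∈ E^1. -/
/-!
The compact set `tsupport x ∩ r⁻¹(v)` and the closed set `s⁻¹(w)` are disjoint, so a Urysohn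
function `φ` equal to `1` near the first and `0` near the second splits `x = (1 - φ) x + φ x`,
where the support of `x₁ = (1 - φ) x` misses `r⁻¹(v)` and that of `x₂ = φ x` misses `s⁻¹(w)`.
Then `r (supp x₁)` is a compact set not containing `v`, and Urysohn's lemma on `E⁰` gives
`g₁ ∈ C_c(E⁰)` with `g₁ (v) = 0` and `g₁ = 1` on it, so that `g₁ (r e) x₁ e = x₁ e`;
likewise for `x₂`, `s` and `w`.
-/

open Set Filter Topology

section

variable {X : Type*} [TopologicalSpace X]

theorem disjoint_tsupport_of_eventuallyEq_zero {M : Type*} [Zero M] {f : X → M} {s : Set X}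
    (hf : f =ᶠ[𝓝ˢ s] 0) : Disjoint (tsupport f) s :=
  disjoint_right.2 fun _ he ↦
    (notMem_tsupport_iff_eventuallyEq).2 (hf.filter_mono (nhds_le_nhdsSet he))

variable [RegularSpace X] [LocallyCompactSpace X]

theorem exists_continuous_eventuallyEq_one_zero {s t : Set X} (hs : IsCompact s) (ht : IsClosed t)
    (hst : Disjoint s t) :
    ∃ f : X → ℝ, Continuous f ∧ f =ᶠ[𝓝ˢ s] 1 ∧ f =ᶠ[𝓝ˢ t] 0 := by
  obtain ⟨U, V, hU, hV, hsU, htV, hUV⟩ := SeparatedNhds.of_isCompact_isClosed hs ht hst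
  obtain ⟨K, hK, hsK, hKU⟩ := exists_compact_between hs hU hsU
  obtain ⟨f, hf1, hf0, -, -⟩ :=
    exists_continuous_one_zero_of_isCompact hK hU.isClosed_compl (disjoint_compl_right_iff.2 hKU)
  refine ⟨f, f.continuous, eventually_of_mem (subset_interior_iff_mem_nhdsSet.1 hsK)
    fun _ he ↦ hf1 he, eventually_of_mem (hV.mem_nhdsSet.2 htV)
    fun _ he ↦ hf0 (hUV.subset_compl_left he)⟩

theorem exists_add_eq_disjoint_tsupport {M : Type*} [AddCommGroup M] [Module ℝ M]
    [TopologicalSpace M] [ContinuousSMul ℝ M] {x : X → M} (hx : Continuous x)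
    (hxc : HasCompactSupport x) {A B : Set X} (hA : IsClosed A) (hB : IsClosed B)
    (hAB : Disjoint (tsupport x ∩ A) B) :
    ∃ x₁ x₂ : X → M, Continuous x₁ ∧ HasCompactSupport x₁ ∧ Continuous x₂ ∧
      HasCompactSupport x₂ ∧ Disjoint (tsupport x₁) A ∧ Disjoint (tsupport x₂) B ∧
      x₁ + x₂ = x := by
  obtain ⟨φ, hφ, hφ1, hφ0⟩ :=
    exists_continuous_eventuallyEq_one_zero (hxc.inter_right hA) hB hAB
  have h1φ : (1 - φ) =ᶠ[𝓝ˢ (tsupport x ∩ A)] 0 := hφ1.mono fun _ he ↦ by simp [he]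
  refine ⟨(1 - φ) • x, φ • x, (continuous_const.sub hφ).smul hx, hxc.smul_left,
    hφ.smul hx, hxc.smul_left, ?_, ?_, by rw [sub_smul, one_smul, sub_add_cancel]⟩
  · exact disjoint_left.2 fun e he heA ↦
      (disjoint_tsupport_of_eventuallyEq_zero h1φ).notMem_of_mem_left
        (tsupport_smul_subset_left _ _ he) ⟨tsupport_smul_subset_right _ _ he, heA⟩
  · exact (disjoint_tsupport_of_eventuallyEq_zero hφ0).mono_left (tsupport_smul_subset_left _ _)

end

theorem exists_tendsto_cocompact_mul_eq_self {X Y 𝕜 : Type*} [TopologicalSpace X]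
    [TopologicalSpace Y] [T2Space Y] [LocallyCompactSpace Y] [RCLike 𝕜] {f : X → Y}
    (hf : Continuous f) {y : X → 𝕜} (hy : HasCompactSupport y) {p : Y}
    (hp : Disjoint (tsupport y) (f ⁻¹' {p})) :
    ∃ g : Y → 𝕜, Continuous g ∧ Tendsto g (cocompact Y) (𝓝 0) ∧ g p = 0 ∧
      ∀ e, g (f e) * y e = y e := by
  have hpy : Disjoint (f '' tsupport y) {p} := by
    rw [disjoint_singleton_right]
    rintro ⟨e, he, rfl⟩
    exact hp.notMem_of_mem_left he rfl
  obtain ⟨g, hg1, hg0, hgc, -⟩ :=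
    exists_continuous_one_zero_of_isCompact (hy.image hf) isClosed_singleton hpy
  refine ⟨fun u ↦ (g u : 𝕜), RCLike.continuous_ofReal.comp g.continuous,
    (hgc.comp_left RCLike.ofReal_zero).is_zero_at_infty, by simpa using hg0 rfl, fun e ↦ ?_⟩
  by_cases he : e ∈ tsupport y
  · simp [hg1 (mem_image_of_mem f he)]
  · simp [image_eq_zero_of_notMem_tsupport he]

/-- Let `E = (E⁰, E¹, r, s)` be a topological graph, `v, w ∈ E⁰`,
and let `x ∈ C_c(E¹)` (continuous, compactly supported, complex-valued) satisfy
`supp(x) ∩ E¹_{v,w} = ∅`, where `E¹_{v,w} = r⁻¹(v) ∩ s⁻¹(w)`.  Then there exist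
`g₁, g₂ ∈ C₀(E⁰)` with `g₁(v) = 0` and `g₂(w) = 0`, and `x₁, x₂ ∈ C_c(E¹)`, such that
`x(e) = g₁(r e)·x₁(e) + x₂(e)·g₂(s e)` for every `e ∈ E¹`. -/
theorem split_off_vertex
    {E0 E1 : Type*} [TopologicalSpace E0] [TopologicalSpace E1]
    [LocallyCompactSpace E0] [LocallyCompactSpace E1] [T2Space E0] [T2Space E1]
    (r s : E1 → E0) (hr : IsProperMap r) (hs : IsLocalHomeomorph s) (v w : E0)
    (x : E1 → ℂ) (hx : Continuous x) (hxc : HasCompactSupport x)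
    (hsupp : tsupport x ∩ (r ⁻¹' {v} ∩ s ⁻¹' {w}) = ∅) :
    ∃ (g₁ g₂ : E0 → ℂ) (x₁ x₂ : E1 → ℂ),
      Continuous g₁ ∧ Tendsto g₁ (cocompact E0) (nhds 0) ∧
      Continuous g₂ ∧ Tendsto g₂ (cocompact E0) (nhds 0) ∧
      g₁ v = 0 ∧ g₂ w = 0 ∧
      Continuous x₁ ∧ HasCompactSupport x₁ ∧
      Continuous x₂ ∧ HasCompactSupport x₂ ∧
      ∀ e : E1, x e = g₁ (r e) * x₁ e + x₂ e * g₂ (s e) := by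
  obtain ⟨x₁, x₂, hx₁, hx₁c, hx₂, hx₂c, hx₁v, hx₂w, hsum⟩ :=
    exists_add_eq_disjoint_tsupport hx hxc (isClosed_singleton.preimage hr.continuous)
      (isClosed_singleton.preimage hs.continuous)
      (by rwa [disjoint_iff_inter_eq_empty, inter_assoc])
  obtain ⟨g₁, hg₁, hg₁c, hg₁v, hg₁x⟩ :=
    exists_tendsto_cocompact_mul_eq_self hr.continuous hx₁c hx₁v
  obtain ⟨g₂, hg₂, hg₂c, hg₂w, hg₂x⟩ :=
    exists_tendsto_cocompact_mul_eq_self hs.continuous hx₂c hx₂w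
  refine ⟨g₁, g₂, x₁, x₂, hg₁, hg₁c, hg₂, hg₂c, hg₁v, hg₂w, hx₁, hx₁c, hx₂, hx₂c, fun e ↦ ?_⟩
  rw [hg₁x, mul_comm, hg₂x, ← hsum, Pi.add_apply]
end

section
/- Let X be a topological space and (U'_i)_{1≤i≤n} a finite open cover of X such that U'_i ∩ U'_j ∩ U'_p = ∅ whenever i, j, p are pairwise distinct. Let (f_i)_{1≤i≤n} be a partition of unity subordinate to this cover: each f_i : X → [0,1] is continuous, the closed support of f_i is contained in U'_i, and Σ_{i=1}^n f_i(x) = 1 for all x ∈ X. Define U_i = {x ∈ X : f_i(x) > 1/3}. Then (U_i)_{1≤i≤n} is an open cover of X with closure(U_i) ⊆ U'_i for every i, and for all i ≠ j the sets closure(U_i) \ U_j and closure(U_j) \ U_i are disjoint. -/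
/-!
No point lies in three of the `U'_i`, so at every point at most two of the `f_i` are nonzero.
Since they sum to `1`, one of them is at least `1/2`, which gives the cover. On
`closure U_i \ U_j` we have `f_i ≥ 1/3 ≥ f_j`, so a point in both differences would have
`f_i = f_j = 1/3`; but two nonzero values at a point sum to `1`.
-/

open Finset

section AtMostTwoNonzero

variable {ι : Type*} [Fintype ι]

theorem card_filter_ne_zero_le_two_of_inter_inter_eq_empty {X M : Type*} [Zero M]
    [DecidableEq M] (U : ι → Set X)
    (hU : ∀ i j p, i ≠ j → j ≠ p → i ≠ p → U i ∩ U j ∩ U p = ∅)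
    (f : ι → X → M) (hf : ∀ i, Function.support (f i) ⊆ U i) (x : X) :
    #{p | f p x ≠ 0} ≤ 2 := by
  by_contra! h
  obtain ⟨i, hi, j, hj, p, hp, hij, hip, hjp⟩ := two_lt_card.mp h
  simp only [mem_filter, mem_univ, true_and] at hi hj hp
  have hx : x ∈ U i ∩ U j ∩ U p := ⟨⟨hf i hi, hf j hj⟩, hf p hp⟩
  rw [hU i j p hij hjp hip] at hx
  exact hx

theorem sum_eq_add_of_card_filter_ne_zero_le_two {M : Type*} [AddCommMonoid M] [DecidableEq M]
    [DecidableEq ι] {a : ι → M} (ha : #{p | a p ≠ 0} ≤ 2) {i j : ι} (hij : i ≠ j)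
    (hi : a i ≠ 0) (hj : a j ≠ 0) : ∑ p, a p = a i + a j := by
  have hpair : ({i, j} : Finset ι) = ({p | a p ≠ 0} : Finset ι) :=
    eq_of_subset_of_card_le (insert_subset_iff.mpr ⟨by simpa, by simpa⟩) (card_pair hij ▸ ha)
  rw [← sum_filter_ne_zero, ← hpair, sum_pair hij]

theorem exists_half_le_of_card_filter_ne_zero_le_two {a : ι → ℝ}
    (ha : #{p | a p ≠ 0} ≤ 2) (hsum : ∑ p, a p = 1) : ∃ i, 1 / 2 ≤ a i := by
  rw [← sum_filter_ne_zero] at hsum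
  have hne : ({p | a p ≠ 0} : Finset ι).Nonempty :=
    nonempty_of_sum_ne_zero (f := a) (by rw [hsum]; exact one_ne_zero)
  obtain ⟨i, -, hi⟩ := exists_le_of_sum_le hne (g := a) (f := fun _ => 1 / 2) <| by
    rw [hsum, sum_const, nsmul_eq_mul]
    have : (#{p | a p ≠ 0} : ℝ) ≤ 2 := by exact_mod_cast ha
    linarith
  exact ⟨i, hi⟩

end AtMostTwoNonzero

theorem partition_of_unity_shrink_cover_general
    {X : Type*} [TopologicalSpace X] (n : ℕ)
    (U' : Fin n → Set X)
    (hU'triple : ∀ i j p : Fin n, i ≠ j → j ≠ p → i ≠ p → U' i ∩ U' j ∩ U' p = ∅)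
    (f : Fin n → X → ℝ) (hfc : ∀ i, Continuous (f i))
    (hfsupp : ∀ i, tsupport (f i) ⊆ U' i)
    (hfsum : ∀ x, ∑ i, f i x = 1) :
    (∀ i, IsOpen {x : X | 1 / 3 < f i x}) ∧
    (∀ x : X, ∃ i, x ∈ {x : X | 1 / 3 < f i x}) ∧
    (∀ i, closure {x : X | 1 / 3 < f i x} ⊆ U' i) ∧
    (∀ i j : Fin n, i ≠ j →
      Disjoint (closure {x : X | 1 / 3 < f i x} \ {x : X | 1 / 3 < f j x})
               (closure {x : X | 1 / 3 < f j x} \ {x : X | 1 / 3 < f i x})) := by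
  have hcard (x : X) : #{p | f p x ≠ 0} ≤ 2 :=
    card_filter_ne_zero_le_two_of_inter_inter_eq_empty U' hU'triple f
      (fun i => (subset_tsupport _).trans (hfsupp i)) x
  have hcl_le (i : Fin n) : closure {x | 1 / 3 < f i x} ⊆ {x | 1 / 3 ≤ f i x} :=
    closure_lt_subset_le continuous_const (hfc i)
  refine ⟨fun i => isOpen_lt continuous_const (hfc i), fun x => ?_, fun i => ?_,
    fun i j hij => ?_⟩
  · obtain ⟨i, hi⟩ := exists_half_le_of_card_filter_ne_zero_le_two (hcard x) (hfsum x)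
    exact ⟨i, show 1 / 3 < f i x by linarith⟩
  · refine (closure_mono fun x (hx : 1 / 3 < f i x) => ?_).trans (hfsupp i)
    exact (lt_trans (by norm_num) hx).ne'
  · rw [Set.disjoint_left]
    rintro x ⟨hxi, hxj⟩ ⟨hxj', hxi'⟩
    have hi : f i x = 1 / 3 := le_antisymm (not_lt.mp hxi') (hcl_le i hxi)
    have hj : f j x = 1 / 3 := le_antisymm (not_lt.mp hxj) (hcl_le j hxj')
    have hsum := sum_eq_add_of_card_filter_ne_zero_le_two (hcard x) hij
      (by norm_num [hi]) (by norm_num [hj])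
    linarith [hfsum x]

/-- Let `X` be a topological space and `(U'_i)_{1≤i≤n}` a finite open
cover of `X` such that `U'_i ∩ U'_j ∩ U'_p = ∅` for pairwise distinct `i, j, p`.  Let
`(f_i)` be a partition of unity subordinate to this cover: each `f_i : X → [0,1]` is
continuous, `tsupport (f_i) ⊆ U'_i`, and `Σ_i f_i(x) = 1` for all `x`.  Put
`U_i = {x : f_i(x) > 1/3}`.  Then `(U_i)` is an open cover of `X`,
`closure (U_i) ⊆ U'_i` for every `i`, and for `i ≠ j` the sets
`closure (U_i) \ U_j` and `closure (U_j) \ U_i` are disjoint. -/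
theorem partition_of_unity_shrink_cover
    {X : Type*} [TopologicalSpace X] (n : ℕ)
    (U' : Fin n → Set X) (hU'o : ∀ i, IsOpen (U' i))
    (hU'cov : (⋃ i, U' i) = Set.univ)
    (hU'triple : ∀ i j p : Fin n, i ≠ j → j ≠ p → i ≠ p → U' i ∩ U' j ∩ U' p = ∅)
    (f : Fin n → X → ℝ) (hfc : ∀ i, Continuous (f i))
    (hf01 : ∀ i x, f i x ∈ Set.Icc (0 : ℝ) 1)
    (hfsupp : ∀ i, tsupport (f i) ⊆ U' i)
    (hfsum : ∀ x, ∑ i, f i x = 1) :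
    (∀ i, IsOpen {x : X | 1 / 3 < f i x}) ∧
    (∀ x : X, ∃ i, x ∈ {x : X | 1 / 3 < f i x}) ∧
    (∀ i, closure {x : X | 1 / 3 < f i x} ⊆ U' i) ∧
    (∀ i j : Fin n, i ≠ j →
      Disjoint (closure {x : X | 1 / 3 < f i x} \ {x : X | 1 / 3 < f j x})
               (closure {x : X | 1 / 3 < f j x} \ {x : X | 1 / 3 < f i x})) :=
  partition_of_unity_shrink_cover_general n U' hU'triple f hfc hfsupp hfsum
end

section
/- Let E = (E^0, E^1, s_E, r_E) and F = (F^0, F^1, s_F, r_F) be compact topological graphs that are locally conjugate via a homeomorphism τ : E^0 → F^0, and assume every finite open cover of E^0 admits a finite open refinement, still covering E^0, in which any three pairwise distinct members have empty intersection (i.e. the covering dimension of E^0 is at most 1). Then there exists a finite open cover (U_i)_{1≤i≤n} of E^0 which is admissible, i.e. satisfies: (C1) for each i there exist an integer m(i) and pairwise disjoint open sets U_{i1}, …, U_{i m(i)} ⊆ E^1 with s_E^{-1}(U_i) = ⋃_{k=1}^{m(i)} U_{ik} and s_E mapping each U_{ik} homeomorphically onto U_i; (C2) for each i there is a homeomorphism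 γ_i of s_E^{-1}(U_i) onto s_F^{-1}(τ(U_i)) with s_F ∘ γ_i = τ ∘ s_E and r_F ∘ γ_i = τ ∘ r_E on s_E^{-1}(U_i); (C3) U_i ∩ U_j ∩ U_k = ∅ whenever i, j, k are pairwise distinct; (C4) closure(U_i) \ U_j and closure(U_j) \ U_i are disjoint for i ≠ j; (C5) if U_i ∩ U_j ≠ ∅, then m(i) = m(j) and there is a permutation π of {1, …, m(i)} such that U_{ik} ∩ U_{jl} ≠ ∅ if and only if l = π(k); (C6) the corresponding cover of F given by V_i = τ(U_i) and V_{ik} = γ_i(U_{ik}) also satisfies (C5). -/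
/-- `f` maps `A ⊆ X` homeomorphically onto `B ⊆ Y`: there is a partial homeomorphism
with source `A` and target `B` agreeing with `f` on `A`. -/
def MapsHomeoOn {X Y : Type*} [TopologicalSpace X] [TopologicalSpace Y]
    (f : X → Y) (A : Set X) (B : Set Y) : Prop :=
  ∃ e : PartialHomeomorph X Y, e.source = A ∧ e.target = B ∧ Set.EqOn f e A

/-!
`sE` is a local homeomorphism of a compact Hausdorff space, hence a covering map, so `E⁰` is
covered by finitely many charts `Φ a`: evenly covered open sets over which `E` and `F` are also
conjugate. Shrink their bases to `C a` with `closure (C a) ⊆ (Φ a).base`. Transitions between the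
sheets of two charts are locally constant, so every `u` has a neighbourhood `N u` on which all
transitions between charts at `u` are constant, on both sides of the conjugacy, and which meets
`C a` only if `u ∈ (Φ a).base`. Refine `{N u}` to a cover `B` of order `2` and shrink it to `U` with
`closure (U j) ⊆ B j`: a point of `closure (U i) ∩ closure (U j)` outside `U i ∪ U j` would lie in
a third `U k`, which gives (C4). Finally, if `U i` and `U j` meet at a point of `C c`, then both
their base points lie in `(Φ c).base`, so the transition between their charts factors through
`Φ c` and is constant on `U i ∩ U j`; this gives (C5) and (C6).
-/

open Set Filter Topology

namespace MapsHomeoOn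

variable {X Y Z W : Type*} [TopologicalSpace X] [TopologicalSpace Y] [TopologicalSpace Z]
  [TopologicalSpace W] {f : X → Y} {A A' : Set X} {B : Set Y}

theorem injOn (h : MapsHomeoOn f A B) : InjOn f A := by
  obtain ⟨e, rfl, -, hfe⟩ := h
  exact e.injOn.congr hfe.symm

theorem image_eq (h : MapsHomeoOn f A B) : f '' A = B := by
  obtain ⟨e, rfl, rfl, hfe⟩ := h
  rw [hfe.image_eq, e.image_source_eq_target]

theorem exists_openPartialHomeomorph (h : MapsHomeoOn f A B) (hA : IsOpen A) (hB : IsOpen B) :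
    ∃ e : OpenPartialHomeomorph X Y, e.source = A ∧ e.target = B ∧ EqOn f e A := by
  obtain ⟨e, rfl, rfl, hfe⟩ := h
  exact ⟨⟨e, hA, hB⟩, rfl, rfl, hfe⟩

theorem isOpen_image (h : MapsHomeoOn f A B) (hA : IsOpen A) (hB : IsOpen B) (hA' : IsOpen A')
    (hA'A : A' ⊆ A) : IsOpen (f '' A') := by
  obtain ⟨e, rfl, -, hfe⟩ := h.exists_openPartialHomeomorph hA hB
  rw [(hfe.mono hA'A).image_eq]
  exact e.isOpen_image_of_subset_source hA' hA'A

theorem mono (h : MapsHomeoOn f A B) (hA : IsOpen A) (hB : IsOpen B) (hA' : IsOpen A')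
    (hA'A : A' ⊆ A) : MapsHomeoOn f A' (f '' A') := by
  obtain ⟨e, rfl, -, hfe⟩ := h.exists_openPartialHomeomorph hA hB
  have hsource : (e.restrOpen A' hA').source = A' := by
    rw [e.restrOpen_source, inter_eq_right.2 hA'A]
  refine ⟨(e.restrOpen A' hA').toPartialHomeomorph, hsource, ?_, fun x hx => hfe (hA'A hx)⟩
  rw [(hfe.mono hA'A).image_eq, ← (e.restrOpen A' hA').image_source_eq_target, hsource]
  rfl

theorem of_injOn [Nonempty X] (hc : Continuous f) (ho : IsOpenMap f) (hA : IsOpen A)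
    (hinj : InjOn f A) : MapsHomeoOn f A (f '' A) :=
  ⟨.ofContinuousOpen (hinj.toPartialEquiv f A) hc.continuousOn ho hA, rfl, rfl, fun _ _ => rfl⟩

/-- On `C`, `h = φ ∘ f ∘ g⁻¹`. -/
theorem of_comp_eq {g : X → Z} {h : Z → W} {φ : Y ≃ₜ W} {C : Set Z} (hf : MapsHomeoOn f A B)
    (hg : MapsHomeoOn g A C) (hA : IsOpen A) (hB : IsOpen B) (hC : IsOpen C)
    (hcomm : ∀ x ∈ A, h (g x) = φ (f x)) : MapsHomeoOn h C (φ '' B) := by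
  obtain ⟨ef, rfl, rfl, hfe⟩ := hf.exists_openPartialHomeomorph hA hB
  obtain ⟨eg, hgs, rfl, hge⟩ := hg.exists_openPartialHomeomorph hA hC
  refine ⟨((eg.symm.trans' ef (by rw [eg.symm_target, hgs])).transHomeomorph φ).toPartialHomeomorph,
    rfl, (φ.image_eq_preimage_symm _).symm, fun z hz => ?_⟩
  have hz' : eg.symm z ∈ ef.source := hgs ▸ eg.map_target hz
  change h z = φ (ef (eg.symm z))
  rw [← hfe hz', ← hcomm _ hz', hge hz', eg.right_inv hz]

end MapsHomeoOn

structure EvenlyCoveredSet {Y X : Type*} [TopologicalSpace Y] [TopologicalSpace X] (s : Y → X)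
    (m : ℕ) where
  base : Set X
  sheet : Fin m → Set Y
  isOpen_base : IsOpen base
  isOpen_sheet (k : Fin m) : IsOpen (sheet k)
  disjoint_sheet (k l : Fin m) : k ≠ l → Disjoint (sheet k) (sheet l)
  preimage_base : s ⁻¹' base = ⋃ k, sheet k
  mapsHomeoOn (k : Fin m) : MapsHomeoOn s (sheet k) base

namespace EvenlyCoveredSet

variable {Y X : Type*} [TopologicalSpace Y] [TopologicalSpace X] {s : Y → X} {m m' m'' : ℕ}
  (D : EvenlyCoveredSet s m)

theorem sheet_subset_preimage (k : Fin m) : D.sheet k ⊆ s ⁻¹' D.base :=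
  D.preimage_base ▸ subset_iUnion D.sheet k

theorem exists_mem_sheet {y : Y} (hy : s y ∈ D.base) : ∃ k, y ∈ D.sheet k :=
  mem_iUnion.1 (D.preimage_base ▸ hy)

theorem eq_of_mem_sheet {y : Y} {k l : Fin m} (hk : y ∈ D.sheet k) (hl : y ∈ D.sheet l) :
    k = l :=
  by_contra fun h => (D.disjoint_sheet k l h).notMem_of_mem_left hk hl

theorem exists_mem_sheet_of_mem_base (k : Fin m) {x : X} (hx : x ∈ D.base) :
    ∃ y ∈ D.sheet k, s y = x := by
  rwa [← mem_image, (D.mapsHomeoOn k).image_eq]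

def restrict (U : Set X) (hU : IsOpen U) (hUD : U ⊆ D.base) (hs : Continuous s) :
    EvenlyCoveredSet s m where
  base := U
  sheet k := D.sheet k ∩ s ⁻¹' U
  isOpen_base := hU
  isOpen_sheet k := (D.isOpen_sheet k).inter (hU.preimage hs)
  disjoint_sheet k l hkl := (D.disjoint_sheet k l hkl).mono inter_subset_left inter_subset_left
  preimage_base := by
    rw [← iUnion_inter, ← D.preimage_base, inter_eq_right.2 (preimage_mono hUD)]
  mapsHomeoOn k := by
    have h := (D.mapsHomeoOn k).mono (D.isOpen_sheet k) D.isOpen_base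
      ((D.isOpen_sheet k).inter (hU.preimage hs)) inter_subset_left
    rwa [image_inter_preimage, (D.mapsHomeoOn k).image_eq, inter_eq_right.2 hUD] at h

def IsTransition (D' : EvenlyCoveredSet s m') (A : Set X) (σ : Fin m → Fin m') : Prop :=
  ∀ k, D.sheet k ∩ s ⁻¹' A ⊆ D'.sheet (σ k)

theorem exists_eventually_isTransition (hs : IsOpenMap s) (D' : EvenlyCoveredSet s m') {x : X}
    (hx : x ∈ D.base) (hx' : x ∈ D'.base) :
    ∃ σ : Fin m → Fin m', ∀ᶠ A in (𝓝 x).smallSets, D.IsTransition D' A σ := by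
  choose y hy hsy using fun k => D.exists_mem_sheet_of_mem_base k hx
  choose σ hσ using fun k => D'.exists_mem_sheet (y := y k) (by rwa [hsy])
  refine ⟨σ, eventually_all.2 fun k => ?_⟩
  have hnhds : s '' (D.sheet k ∩ D'.sheet (σ k)) ∈ 𝓝 x :=
    (hs _ ((D.isOpen_sheet k).inter (D'.isOpen_sheet _))).mem_nhds ⟨y k, ⟨hy k, hσ k⟩, hsy k⟩
  refine (eventually_smallSets_subset.2 hnhds).mono fun A hA z ⟨hz, hzA⟩ => ?_
  obtain ⟨w, ⟨hwk, hwσ⟩, hsw⟩ := hA hzA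
  rwa [(D.mapsHomeoOn k).injOn hz hwk hsw.symm]

variable {D} {D' : EvenlyCoveredSet s m'} {D'' : EvenlyCoveredSet s m''} {A B : Set X}
  {σ : Fin m → Fin m'}

theorem IsTransition.trans {σ' : Fin m' → Fin m''} (h : D.IsTransition D' A σ)
    (h' : D'.IsTransition D'' B σ') : D.IsTransition D'' (A ∩ B) (σ' ∘ σ) :=
  fun k _ ⟨hy, hyA, hyB⟩ => h' (σ k) ⟨h k ⟨hy, hyA⟩, hyB⟩

theorem IsTransition.of_sheet_subset (h : D.IsTransition D' A σ) {D₁ : EvenlyCoveredSet s m}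
    {D₂ : EvenlyCoveredSet s m'} (h₁ : ∀ k, D₁.sheet k ⊆ D.sheet k)
    (h₂ : ∀ l, D₂.sheet l ⊆ D'.sheet l) (hA : D₁.base ∩ D₂.base ⊆ A) :
    D₁.IsTransition D₂ D₂.base σ := by
  rintro k y ⟨hy, hy₂⟩
  obtain ⟨l, hl⟩ := D₂.exists_mem_sheet hy₂
  have hyD' : y ∈ D'.sheet (σ k) := h k ⟨h₁ k hy, hA ⟨D₁.sheet_subset_preimage k hy, hy₂⟩⟩
  rwa [D'.eq_of_mem_sheet hyD' (h₂ l hl)]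

/-- Over a common point of the bases both families of sheets enumerate the same fibre, so `σ` is
a bijection. -/
theorem IsTransition.exists_equiv (h : D.IsTransition D' D'.base σ)
    (hne : (D.base ∩ D'.base).Nonempty) :
    ∃ π : Fin m ≃ Fin m', ∀ k l, (D.sheet k ∩ D'.sheet l).Nonempty ↔ l = π k := by
  obtain ⟨x, hx, hx'⟩ := hne
  choose y hy hsy using fun k => D.exists_mem_sheet_of_mem_base k hx
  have hyσ : ∀ k, y k ∈ D'.sheet (σ k) := fun k => h k ⟨hy k, by rwa [mem_preimage, hsy]⟩
  have hinj : Function.Injective σ := fun k k' hkk' => by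
    have : y k = y k' := (D'.mapsHomeoOn (σ k)).injOn (hyσ k) (hkk' ▸ hyσ k') (by rw [hsy, hsy])
    exact D.eq_of_mem_sheet (hy k) (this ▸ hy k')
  have hsurj : Function.Surjective σ := fun l => by
    obtain ⟨z, hz, hsz⟩ := D'.exists_mem_sheet_of_mem_base l hx'
    obtain ⟨k, hk⟩ := D.exists_mem_sheet (y := z) (by rwa [hsz])
    exact ⟨k, D'.eq_of_mem_sheet (h k ⟨hk, by rwa [mem_preimage, hsz]⟩) hz⟩
  refine ⟨Equiv.ofBijective σ ⟨hinj, hsurj⟩, fun k l => ⟨fun ⟨z, hzk, hzl⟩ => ?_, ?_⟩⟩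
  · exact D'.eq_of_mem_sheet hzl (h k ⟨hzk, D'.sheet_subset_preimage l hzl⟩)
  · rintro rfl
    exact ⟨y k, hy k, hyσ k⟩

end EvenlyCoveredSet

theorem IsLocalHomeomorph.exists_evenlyCoveredSet {Y X : Type*} [TopologicalSpace Y]
    [TopologicalSpace X] [CompactSpace Y] [T2Space Y] [T2Space X] {s : Y → X}
    (hs : IsLocalHomeomorph s) (x : X) : ∃ (m : ℕ) (D : EvenlyCoveredSet s m), x ∈ D.base := by
  -- `H : s ⁻¹' U ≃ₜ U × s ⁻¹' {x}` trivializes `s` over `U`; the sheets are its slices.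
  obtain ⟨_, U, hxU, hU, hsU, H, hH⟩ := isLocalHomeomorph_iff_isCoveringMap.1 hs x
  have : CompactSpace (s ⁻¹' {x}) :=
    isCompact_iff_compactSpace.1 (isClosed_singleton.preimage hs.continuous).isCompact
  have : Finite (s ⁻¹' {x}) := finite_of_compact_of_discrete
  let e := Finite.equivFin (s ⁻¹' {x})
  let sheet (k : Fin (Nat.card (s ⁻¹' {x}))) : Set Y :=
    Subtype.val '' {y | (H y).2 = e.symm k}
  have hsheet : ∀ k (y : s ⁻¹' U), (y : Y) ∈ sheet k ↔ (H y).2 = e.symm k := fun k y =>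
    Subtype.val_injective.mem_set_image
  have hopen (k) : IsOpen (sheet k) := hsU.isOpenMap_subtype_val _
    ((isOpen_discrete {e.symm k}).preimage (continuous_snd.comp H.continuous))
  refine ⟨_, ⟨U, sheet, hU, hopen, fun k l hkl => ?_, ?_, fun k => ?_⟩, hxU⟩
  · refine disjoint_left.2 ?_
    rintro _ ⟨y, hy, rfl⟩ hyl
    exact hkl (e.symm.injective (hy.symm.trans ((hsheet l y).1 hyl)))
  · refine subset_antisymm (fun y hy => mem_iUnion.2 ⟨e (H ⟨y, hy⟩).2, ?_⟩) ?_
    · exact (hsheet _ ⟨y, hy⟩).2 (e.symm_apply_apply _).symm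
    · exact iUnion_subset fun k => image_subset_iff.2 fun z _ => z.2
  · have : Nonempty Y := ⟨e.symm k⟩
    have himage : s '' sheet k = U := by
      refine subset_antisymm (image_subset_iff.2 fun _ ⟨y, _, hy⟩ => hy ▸ y.2) fun v hv => ?_
      refine ⟨H.symm (⟨v, hv⟩, e.symm k), (hsheet k _).2 (by simp), ?_⟩
      rw [← hH, H.apply_symm_apply]
    refine himage ▸ MapsHomeoOn.of_injOn hs.continuous hs.isOpenMap (hopen k) ?_
    rintro _ ⟨y, hy, rfl⟩ _ ⟨z, hz, rfl⟩ hyz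
    refine congrArg Subtype.val (H.injective (Prod.ext (Subtype.ext ?_) (hy.trans hz.symm)))
    rw [hH, hH, hyz]

section Cover

variable {X : Type*} [TopologicalSpace X]

def CoveringDimLeOne (X : Type*) [TopologicalSpace X] : Prop :=
  ∀ (N : ℕ) (W : Fin N → Set X), (∀ i, IsOpen (W i)) → (⋃ i, W i) = Set.univ →
    ∃ (M : ℕ) (W' : Fin M → Set X), (∀ j, IsOpen (W' j)) ∧ (⋃ j, W' j) = Set.univ ∧
      (∀ j, ∃ i, W' j ⊆ W i) ∧
      (∀ j k l : Fin M, j ≠ k → k ≠ l → j ≠ l → W' j ∩ W' k ∩ W' l = ∅)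

theorem disjoint_closure_diff_of_closure_subset {ι : Type*} {U B : ι → Set X}
    (hU : ⋃ k, U k = univ) (hUB : ∀ k, closure (U k) ⊆ B k)
    (hB : ∀ i j k, i ≠ j → j ≠ k → i ≠ k → B i ∩ B j ∩ B k = ∅) {i j : ι} (hij : i ≠ j) :
    Disjoint (closure (U i) \ U j) (closure (U j) \ U i) := by
  refine disjoint_left.2 fun x ⟨hxi, hxj'⟩ ⟨hxj, hxi'⟩ => ?_
  obtain ⟨k, hk⟩ := mem_iUnion.1 (hU ▸ mem_univ x : x ∈ ⋃ k, U k)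
  have hki : i ≠ k := fun h => hxi' (h ▸ hk)
  have hkj : j ≠ k := fun h => hxj' (h ▸ hk)
  exact (hB i j k hij hkj hki).subset ⟨⟨hUB i hxi, hUB j hxj⟩, hUB k (subset_closure hk)⟩

theorem exists_cover_subordinate_of_coveringDimLeOne [CompactSpace X] [T2Space X]
    (hX : CoveringDimLeOne X) (N : X → Set X) (hN : ∀ x, IsOpen (N x)) (hxN : ∀ x, x ∈ N x) :
    ∃ (M : ℕ) (U : Fin M → Set X) (c : Fin M → X), (∀ j, IsOpen (U j)) ∧ ⋃ j, U j = univ ∧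
      (∀ j, U j ⊆ N (c j)) ∧
      (∀ i j k : Fin M, i ≠ j → j ≠ k → i ≠ k → U i ∩ U j ∩ U k = ∅) ∧
      ∀ i j : Fin M, i ≠ j → Disjoint (closure (U i) \ U j) (closure (U j) \ U i) := by
  obtain ⟨t, ht⟩ := CompactSpace.elim_nhds_subcover N fun x => (hN x).mem_nhds (hxN x)
  have hcover : ⋃ i, N (t.equivFin.symm i) = univ := by
    refine eq_univ_of_forall fun x => ?_
    obtain ⟨y, hy, hxy⟩ := mem_iUnion₂.1 (ht ▸ mem_univ x : x ∈ ⋃ y ∈ t, N y)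
    exact mem_iUnion.2 ⟨t.equivFin ⟨y, hy⟩, by simpa using hxy⟩
  obtain ⟨M, B, hBo, hB, hBN, hB3⟩ := hX _ _ (fun i => hN _) hcover
  choose c hc using hBN
  obtain ⟨U, hU, hUo, hUB⟩ := exists_iUnion_eq_closure_subset hBo (fun _ => toFinite _) hB
  have hUB' (j) : U j ⊆ B j := subset_closure.trans (hUB j)
  refine ⟨M, U, fun j => t.equivFin.symm (c j), hUo, hU, fun j => (hUB' j).trans (hc j),
    fun i j k hij hjk hik => subset_empty_iff.1 ?_,
    fun i j hij => disjoint_closure_diff_of_closure_subset hU hUB hB3 hij⟩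
  exact hB3 i j k hij hjk hik ▸ inter_subset_inter (inter_subset_inter (hUB' i) (hUB' j)) (hUB' k)

end Cover

section Conjugacy

variable {E0 E1 F0 F1 : Type*} [TopologicalSpace E0] [TopologicalSpace E1] [TopologicalSpace F0]
  [TopologicalSpace F1]

/-- Condition (C2) on `U` and `γ`. -/
def IsLocalConjugacy (sE rE : E1 → E0) (sF rF : F1 → F0) (τ : E0 ≃ₜ F0) (U : Set E0)
    (γ : E1 → F1) : Prop :=
  MapsHomeoOn γ (sE ⁻¹' U) (sF ⁻¹' (τ '' U)) ∧
    ∀ x ∈ sE ⁻¹' U, sF (γ x) = τ (sE x) ∧ rF (γ x) = τ (rE x)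

variable {sE rE : E1 → E0} {sF rF : F1 → F0} {τ : E0 ≃ₜ F0} {U V : Set E0} {γ : E1 → F1}

theorem IsLocalConjugacy.image_preimage (h : IsLocalConjugacy sE rE sF rF τ U γ)
    (hVU : V ⊆ U) : γ '' (sE ⁻¹' V) = sF ⁻¹' (τ '' V) := by
  refine subset_antisymm (image_subset_iff.2 fun x hx => ?_) fun y hy => ?_
  · rw [mem_preimage, mem_preimage, (h.2 x (hVU hx)).1]
    exact mem_image_of_mem τ hx
  · have hyU : y ∈ γ '' (sE ⁻¹' U) := h.1.image_eq ▸ preimage_mono (image_mono hVU) hy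
    obtain ⟨x, hx, rfl⟩ := hyU
    rw [mem_preimage, (h.2 x hx).1, τ.injective.mem_set_image] at hy
    exact mem_image_of_mem γ hy

theorem IsLocalConjugacy.mono (h : IsLocalConjugacy sE rE sF rF τ U γ) (hU : IsOpen U)
    (hV : IsOpen V) (hVU : V ⊆ U) (hsE : Continuous sE) (hsF : Continuous sF) :
    IsLocalConjugacy sE rE sF rF τ V γ :=
  ⟨h.image_preimage hVU ▸ h.1.mono (hU.preimage hsE) ((τ.isOpenMap U hU).preimage hsF)
    (hV.preimage hsE) (preimage_mono hVU), fun x hx => h.2 x (hVU hx)⟩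

structure ConjugacyChart (sE rE : E1 → E0) (sF rF : F1 → F0) (τ : E0 ≃ₜ F0) (m : ℕ)
    extends EvenlyCoveredSet sE m where
  γ : E1 → F1
  isLocalConjugacy : IsLocalConjugacy sE rE sF rF τ base γ

namespace ConjugacyChart

variable {m : ℕ} (Φ : ConjugacyChart sE rE sF rF τ m)

def restrict (U : Set E0) (hU : IsOpen U) (hUΦ : U ⊆ Φ.base) (hsE : Continuous sE)
    (hsF : Continuous sF) : ConjugacyChart sE rE sF rF τ m where
  toEvenlyCoveredSet := Φ.toEvenlyCoveredSet.restrict U hU hUΦ hsE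
  γ := Φ.γ
  isLocalConjugacy := Φ.isLocalConjugacy.mono Φ.isOpen_base hU hUΦ hsE hsF

def pushforward (hsE : Continuous sE) (hsF : Continuous sF) : EvenlyCoveredSet sF m where
  base := τ '' Φ.base
  sheet k := Φ.γ '' Φ.sheet k
  isOpen_base := τ.isOpenMap _ Φ.isOpen_base
  isOpen_sheet k := Φ.isLocalConjugacy.1.isOpen_image (Φ.isOpen_base.preimage hsE)
    ((τ.isOpenMap _ Φ.isOpen_base).preimage hsF) (Φ.isOpen_sheet k) (Φ.sheet_subset_preimage k)
  disjoint_sheet k l hkl := by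
    rw [disjoint_iff_inter_eq_empty, ← Φ.isLocalConjugacy.1.injOn.image_inter
      (Φ.sheet_subset_preimage k) (Φ.sheet_subset_preimage l), (Φ.disjoint_sheet k l hkl).inter_eq,
      image_empty]
  preimage_base := by rw [← image_iUnion, ← Φ.preimage_base, Φ.isLocalConjugacy.1.image_eq]
  mapsHomeoOn k := by
    have hopen := Φ.isOpen_base.preimage hsE
    have hopen' := (τ.isOpenMap _ Φ.isOpen_base).preimage hsF
    exact (Φ.mapsHomeoOn k).of_comp_eq
      (Φ.isLocalConjugacy.1.mono hopen hopen' (Φ.isOpen_sheet k) (Φ.sheet_subset_preimage k))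
      (Φ.isOpen_sheet k) Φ.isOpen_base
      (Φ.isLocalConjugacy.1.isOpen_image hopen hopen' (Φ.isOpen_sheet k)
        (Φ.sheet_subset_preimage k))
      fun x hx => (Φ.isLocalConjugacy.2 x (Φ.sheet_subset_preimage k hx)).1

end ConjugacyChart

theorem exists_conjugacyChart [CompactSpace E1] [T2Space E1] [T2Space E0]
    (hsE : IsLocalHomeomorph sE) (hsF : Continuous sF)
    (hconj : ∀ u, ∃ U, IsOpen U ∧ u ∈ U ∧ ∃ γ, IsLocalConjugacy sE rE sF rF τ U γ) (u : E0) :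
    ∃ (m : ℕ) (Φ : ConjugacyChart sE rE sF rF τ m), u ∈ Φ.base := by
  obtain ⟨m, D, huD⟩ := hsE.exists_evenlyCoveredSet u
  obtain ⟨U, hU, huU, γ, hγ⟩ := hconj u
  have hV := hU.inter D.isOpen_base
  exact ⟨m, ⟨D.restrict _ hV inter_subset_right hsE.continuous, γ,
    hγ.mono hU hV inter_subset_left hsE.continuous hsF⟩, huU, huD⟩

variable {ι : Type*} {m : ι → ℕ}

structure IsHomogeneous (Φ : (a : ι) → ConjugacyChart sE rE sF rF τ (m a)) (C : ι → Set E0)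
    (hsE : Continuous sE) (hsF : Continuous sF) (u : E0) (N : Set E0) : Prop where
  mem_base_of_nonempty a : (N ∩ C a).Nonempty → u ∈ (Φ a).base
  subset_base a : u ∈ (Φ a).base → N ⊆ (Φ a).base
  isTransition a b : u ∈ (Φ a).base → u ∈ (Φ b).base →
    ∃ σ, (Φ a).IsTransition (Φ b).toEvenlyCoveredSet N σ
  isTransition_pushforward a b : u ∈ (Φ a).base → u ∈ (Φ b).base →
    ∃ σ, ((Φ a).pushforward hsE hsF).IsTransition ((Φ b).pushforward hsE hsF) (τ '' N) σ

theorem exists_isHomogeneous [Finite ι] (Φ : (a : ι) → ConjugacyChart sE rE sF rF τ (m a))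
    (C : ι → Set E0) (hC : ∀ a, closure (C a) ⊆ (Φ a).base) (hsE : IsLocalHomeomorph sE)
    (hsF : IsLocalHomeomorph sF) (u : E0) :
    ∃ N, IsOpen N ∧ u ∈ N ∧ IsHomogeneous Φ C hsE.continuous hsF.continuous u N := by
  have h₁ : ∀ᶠ N in (𝓝 u).smallSets, ∀ a, (N ∩ C a).Nonempty → u ∈ (Φ a).base := by
    refine eventually_all.2 fun a => ?_
    by_cases hu : u ∈ closure (C a)
    · exact .of_forall fun _ _ => hC a hu
    · refine (eventually_smallSets_subset.2 (isClosed_closure.isOpen_compl.mem_nhds hu)).mono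
        fun N hN ⟨x, hxN, hxC⟩ => absurd (subset_closure hxC) (hN hxN)
  have h₂ : ∀ᶠ N in (𝓝 u).smallSets, ∀ a, u ∈ (Φ a).base → N ⊆ (Φ a).base :=
    eventually_all.2 fun a => eventually_imp_distrib_left.2 fun hu =>
      eventually_smallSets_subset.2 ((Φ a).isOpen_base.mem_nhds hu)
  have h₃ : ∀ᶠ N in (𝓝 u).smallSets, ∀ a b, u ∈ (Φ a).base → u ∈ (Φ b).base →
      ∃ σ, (Φ a).IsTransition (Φ b).toEvenlyCoveredSet N σ :=
    eventually_all.2 fun a => eventually_all.2 fun b => eventually_imp_distrib_left.2 fun ha =>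
      eventually_imp_distrib_left.2 fun hb =>
        have ⟨σ, hσ⟩ := (Φ a).exists_eventually_isTransition hsE.isOpenMap _ ha hb
        hσ.mono fun _ h => ⟨σ, h⟩
  have h₄ : ∀ᶠ N in (𝓝 u).smallSets, ∀ a b, u ∈ (Φ a).base → u ∈ (Φ b).base →
      ∃ σ, ((Φ a).pushforward hsE.continuous hsF.continuous).IsTransition
        ((Φ b).pushforward hsE.continuous hsF.continuous) (τ '' N) σ :=
    eventually_all.2 fun a => eventually_all.2 fun b => eventually_imp_distrib_left.2 fun ha =>
      eventually_imp_distrib_left.2 fun hb =>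
        have ⟨σ, hσ⟩ := ((Φ a).pushforward _ _).exists_eventually_isTransition hsF.isOpenMap
          ((Φ b).pushforward _ _) (mem_image_of_mem τ ha) (mem_image_of_mem τ hb)
        ((τ.continuous.tendsto u).image_smallSets.eventually hσ).mono fun _ h => ⟨σ, h⟩
  obtain ⟨t, ht, hP⟩ := eventually_smallSets.1 (h₁.and (h₂.and (h₃.and h₄)))
  obtain ⟨N, hNt, hN, huN⟩ := mem_nhds_iff.1 ht
  obtain ⟨p₁, p₂, p₃, p₄⟩ := hP N hNt
  exact ⟨N, hN, huN, p₁, p₂, p₃, p₄⟩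

variable {Φ : (a : ι) → ConjugacyChart sE rE sF rF τ (m a)} {C : ι → Set E0}
  {hsE : Continuous sE} {hsF : Continuous sF}

/-- Two meeting homogeneous neighbourhoods both meet some `C c`, so their transitions can be
routed through the chart `Φ c`. -/
theorem IsHomogeneous.exists_isTransition_inter {u₁ u₂ : E0} {N₁ N₂ : Set E0}
    (h₁ : IsHomogeneous Φ C hsE hsF u₁ N₁) (h₂ : IsHomogeneous Φ C hsE hsF u₂ N₂)
    (hC : ⋃ c, C c = univ) (hne : (N₁ ∩ N₂).Nonempty) {a b : ι} (ha : u₁ ∈ (Φ a).base)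
    (hb : u₂ ∈ (Φ b).base) :
    (∃ σ, (Φ a).IsTransition (Φ b).toEvenlyCoveredSet (N₁ ∩ N₂) σ) ∧
      ∃ σ, ((Φ a).pushforward hsE hsF).IsTransition ((Φ b).pushforward hsE hsF)
        (τ '' N₁ ∩ τ '' N₂) σ := by
  obtain ⟨x, hx₁, hx₂⟩ := hne
  obtain ⟨c, hc⟩ := mem_iUnion.1 (hC ▸ mem_univ x : x ∈ ⋃ c, C c)
  have hc₁ := h₁.mem_base_of_nonempty c ⟨x, hx₁, hc⟩
  have hc₂ := h₂.mem_base_of_nonempty c ⟨x, hx₂, hc⟩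
  obtain ⟨σ₁, hσ₁⟩ := h₁.isTransition a c ha hc₁
  obtain ⟨σ₂, hσ₂⟩ := h₂.isTransition c b hc₂ hb
  obtain ⟨σ₁', hσ₁'⟩ := h₁.isTransition_pushforward a c ha hc₁
  obtain ⟨σ₂', hσ₂'⟩ := h₂.isTransition_pushforward c b hc₂ hb
  exact ⟨⟨_, hσ₁.trans hσ₂⟩, ⟨_, hσ₁'.trans hσ₂'⟩⟩

end Conjugacy

theorem exists_admissible_cover_general
    {E0 E1 F0 F1 : Type*}
    [TopologicalSpace E0] [TopologicalSpace E1] [TopologicalSpace F0] [TopologicalSpace F1]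
    [CompactSpace E0] [CompactSpace E1]
    [T2Space E0] [T2Space E1]
    (rE sE : E1 → E0) (hsE : IsLocalHomeomorph sE)
    (rF sF : F1 → F0) (hsF : IsLocalHomeomorph sF)
    (τ : E0 ≃ₜ F0)
    (hconj : ∀ u : E0, ∃ U : Set E0, IsOpen U ∧ u ∈ U ∧
      ∃ γ : E1 → F1, MapsHomeoOn γ (sE ⁻¹' U) (sF ⁻¹' (τ '' U)) ∧
        ∀ x ∈ sE ⁻¹' U, sF (γ x) = τ (sE x) ∧ rF (γ x) = τ (rE x))
    (hdim : ∀ (N : ℕ) (W : Fin N → Set E0), (∀ i, IsOpen (W i)) → (⋃ i, W i) = Set.univ →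
      ∃ (M : ℕ) (W' : Fin M → Set E0), (∀ j, IsOpen (W' j)) ∧ (⋃ j, W' j) = Set.univ ∧
        (∀ j, ∃ i, W' j ⊆ W i) ∧
        (∀ j k l : Fin M, j ≠ k → k ≠ l → j ≠ l → W' j ∩ W' k ∩ W' l = ∅)) :
    ∃ (n : ℕ) (U : Fin n → Set E0) (m : Fin n → ℕ)
      (Ue : (i : Fin n) → Fin (m i) → Set E1) (γ : Fin n → E1 → F1),
      (∀ i, IsOpen (U i)) ∧ (⋃ i, U i) = Set.univ ∧
      -- (C1): each `U i` is evenly covered by the disjoint open sheets `Ue i k`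
      (∀ i, (∀ k, IsOpen (Ue i k)) ∧
        (∀ k l, k ≠ l → Disjoint (Ue i k) (Ue i l)) ∧
        sE ⁻¹' (U i) = ⋃ k, Ue i k ∧
        ∀ k, MapsHomeoOn sE (Ue i k) (U i)) ∧
      -- (C2): local intertwining homeomorphisms `γ i`
      (∀ i, MapsHomeoOn (γ i) (sE ⁻¹' (U i)) (sF ⁻¹' (τ '' U i)) ∧
        ∀ x ∈ sE ⁻¹' (U i), sF (γ i x) = τ (sE x) ∧ rF (γ i x) = τ (rE x)) ∧
      -- (C3): no three distinct members of the cover intersect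
      (∀ i j p : Fin n, i ≠ j → j ≠ p → i ≠ p → U i ∩ U j ∩ U p = ∅) ∧
      -- (C4): `closure (U i) \ U j` and `closure (U j) \ U i` are disjoint
      (∀ i j : Fin n, i ≠ j → Disjoint (closure (U i) \ U j) (closure (U j) \ U i)) ∧
      -- (C5): sheets over intersecting members match up via a permutation
      (∀ i j : Fin n, (U i ∩ U j).Nonempty →
        ∃ π : Fin (m i) ≃ Fin (m j), ∀ k l, (Ue i k ∩ Ue j l).Nonempty ↔ l = π k) ∧
      -- (C6): the corresponding cover `V i = τ '' U i`, `V_{ik} = γ i '' Ue i k` of `F`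
      -- also satisfies (C5)
      (∀ i j : Fin n, ((τ '' U i) ∩ (τ '' U j)).Nonempty →
        ∃ π : Fin (m i) ≃ Fin (m j),
          ∀ k l, ((γ i '' Ue i k) ∩ (γ j '' Ue j l)).Nonempty ↔ l = π k) := by
  choose m Φ hΦ using exists_conjugacyChart hsE hsF.continuous hconj
  obtain ⟨t, ht⟩ := CompactSpace.elim_nhds_subcover (fun u => (Φ u).base)
    fun u => (Φ u).isOpen_base.mem_nhds (hΦ u)
  have hcover : ⋃ a : t, (Φ a).base = univ := by simpa [iUnion_subtype] using ht
  obtain ⟨C, hC, -, hCΦ⟩ := exists_iUnion_eq_closure_subset (fun a : t => (Φ a).isOpen_base)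
    (fun _ => toFinite _) hcover
  choose N hNo huN hN using exists_isHomogeneous (fun a : t => Φ a) C hCΦ hsE hsF
  obtain ⟨M, U, c, hUo, hU, hUN, hC3, hC4⟩ :=
    exists_cover_subordinate_of_coveringDimLeOne hdim N hNo huN
  choose p hp using fun j => mem_iUnion.1 (hcover ▸ mem_univ (c j) : c j ∈ ⋃ a : t, (Φ a).base)
  let Ψ j := (Φ (p j)).restrict (U j) (hUo j) ((hUN j).trans ((hN (c j)).subset_base _ (hp j)))
    hsE.continuous hsF.continuous
  have hT {i j} (hij : (U i ∩ U j).Nonempty) :=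
    (hN (c i)).exists_isTransition_inter (hN (c j)) hC
      (hij.mono (inter_subset_inter (hUN i) (hUN j))) (hp i) (hp j)
  refine ⟨M, U, fun j => m (p j), fun j => (Ψ j).sheet, fun j => (Ψ j).γ, hUo, hU, fun j =>
    ⟨(Ψ j).isOpen_sheet, (Ψ j).disjoint_sheet, (Ψ j).preimage_base, (Ψ j).mapsHomeoOn⟩,
    fun j => (Ψ j).isLocalConjugacy, hC3, hC4, fun i j hij => ?_, fun i j hij => ?_⟩
  · obtain ⟨σ, hσ⟩ := (hT hij).1
    exact (hσ.of_sheet_subset (D₁ := (Ψ i).toEvenlyCoveredSet) (D₂ := (Ψ j).toEvenlyCoveredSet)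
      (fun _ => inter_subset_left) (fun _ => inter_subset_left)
      (inter_subset_inter (hUN i) (hUN j))).exists_equiv hij
  · obtain ⟨σ, hσ⟩ := (hT (by rwa [← image_inter τ.injective, image_nonempty] at hij)).2
    exact (hσ.of_sheet_subset (D₁ := (Ψ i).pushforward hsE.continuous hsF.continuous)
      (D₂ := (Ψ j).pushforward hsE.continuous hsF.continuous)
      (fun _ => image_mono inter_subset_left) (fun _ => image_mono inter_subset_left)
      (inter_subset_inter (image_mono (hUN i)) (image_mono (hUN j)))).exists_equiv hij

/-- Let `E` and `F` be compact topological graphs, locally conjugate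
via a homeomorphism `τ : E⁰ → F⁰` (hypothesis `hconj`), and assume every finite open
cover of `E⁰` admits a finite open refinement, still covering `E⁰`, in which any three
pairwise distinct members have empty intersection (covering dimension of `E⁰` at
most `1`, hypothesis `hdim`).  Then there exists an admissible finite open cover
`(U_i)_{1≤i≤n}` of `E⁰`, i.e. one satisfying (C1)–(C6). -/
theorem exists_admissible_cover
    {E0 E1 F0 F1 : Type*}
    [TopologicalSpace E0] [TopologicalSpace E1] [TopologicalSpace F0] [TopologicalSpace F1]
    [CompactSpace E0] [CompactSpace E1] [CompactSpace F0] [CompactSpace F1]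
    [T2Space E0] [T2Space E1] [T2Space F0] [T2Space F1]
    (rE sE : E1 → E0) (hrE : Continuous rE) (hsE : IsLocalHomeomorph sE)
    (rF sF : F1 → F0) (hrF : Continuous rF) (hsF : IsLocalHomeomorph sF)
    (τ : E0 ≃ₜ F0)
    (hconj : ∀ u : E0, ∃ U : Set E0, IsOpen U ∧ u ∈ U ∧
      ∃ γ : E1 → F1, MapsHomeoOn γ (sE ⁻¹' U) (sF ⁻¹' (τ '' U)) ∧
        ∀ x ∈ sE ⁻¹' U, sF (γ x) = τ (sE x) ∧ rF (γ x) = τ (rE x))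
    (hdim : ∀ (N : ℕ) (W : Fin N → Set E0), (∀ i, IsOpen (W i)) → (⋃ i, W i) = Set.univ →
      ∃ (M : ℕ) (W' : Fin M → Set E0), (∀ j, IsOpen (W' j)) ∧ (⋃ j, W' j) = Set.univ ∧
        (∀ j, ∃ i, W' j ⊆ W i) ∧
        (∀ j k l : Fin M, j ≠ k → k ≠ l → j ≠ l → W' j ∩ W' k ∩ W' l = ∅)) :
    ∃ (n : ℕ) (U : Fin n → Set E0) (m : Fin n → ℕ)
      (Ue : (i : Fin n) → Fin (m i) → Set E1) (γ : Fin n → E1 → F1),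
      (∀ i, IsOpen (U i)) ∧ (⋃ i, U i) = Set.univ ∧
      -- (C1): each `U i` is evenly covered by the disjoint open sheets `Ue i k`
      (∀ i, (∀ k, IsOpen (Ue i k)) ∧
        (∀ k l, k ≠ l → Disjoint (Ue i k) (Ue i l)) ∧
        sE ⁻¹' (U i) = ⋃ k, Ue i k ∧
        ∀ k, MapsHomeoOn sE (Ue i k) (U i)) ∧
      -- (C2): local intertwining homeomorphisms `γ i`
      (∀ i, MapsHomeoOn (γ i) (sE ⁻¹' (U i)) (sF ⁻¹' (τ '' U i)) ∧
        ∀ x ∈ sE ⁻¹' (U i), sF (γ i x) = τ (sE x) ∧ rF (γ i x) = τ (rE x)) ∧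
      -- (C3): no three distinct members of the cover intersect
      (∀ i j p : Fin n, i ≠ j → j ≠ p → i ≠ p → U i ∩ U j ∩ U p = ∅) ∧
      -- (C4): `closure (U i) \ U j` and `closure (U j) \ U i` are disjoint
      (∀ i j : Fin n, i ≠ j → Disjoint (closure (U i) \ U j) (closure (U j) \ U i)) ∧
      -- (C5): sheets over intersecting members match up via a permutation
      (∀ i j : Fin n, (U i ∩ U j).Nonempty →
        ∃ π : Fin (m i) ≃ Fin (m j), ∀ k l, (Ue i k ∩ Ue j l).Nonempty ↔ l = π k) ∧
      -- (C6): the corresponding cover `V i = τ '' U i`, `V_{ik} = γ i '' Ue i k` of `F`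
      -- also satisfies (C5)
      (∀ i j : Fin n, ((τ '' U i) ∩ (τ '' U j)).Nonempty →
        ∃ π : Fin (m i) ≃ Fin (m j),
          ∀ k l, ((γ i '' Ue i k) ∩ (γ j '' Ue j l)).Nonempty ↔ l = π k) :=
  exists_admissible_cover_general rE sE hsE rF sF hsF τ hconj hdim
end

section
/- Let E = (E^0, E^1, r, s) be a compact topological graph and v ∈ E^0 with finite fiber s^{-1}(v) = {f_1, …, f_q}. Suppose V_1, …, V_q are pairwise disjoint open subsets of E^1 with f_j ∈ V_j such that s restricted to each V_j is a homeomorphism onto an open subset of E^0, and suppose t_1, …, t_q are continuous complex-valued functions on E^1 such that supp(t_j) ⊆ V_j and t_j = 1 on an open neighbourhood of f_j. Then every continuous complex-valued function x on E^1 can be written as x(e) = x_0(e) + Σ_{j=1}^q t_j(e)·b_j(s(e)) for all e ∈ E^1, where b_1, …, b_q are continuous complex-valued functions on E^0 and x_0 is a continuous function on E^1 vanishing on an open neighbourhood of s^{-1}(v). -/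
/-- Let `E = (E⁰, E¹, r, s)` be a compact topological graph and
`v ∈ E⁰` with finite fiber `s⁻¹(v) = {f₁, …, f_q}`.  Suppose `V₁, …, V_q` are pairwise
disjoint open subsets of `E¹` with `f_j ∈ V_j` such that `s` restricted to each `V_j`
is a homeomorphism onto an open subset of `E⁰`, and suppose `t₁, …, t_q` are continuous
complex-valued functions on `E¹` with `supp(t_j) ⊆ V_j` and `t_j = 1` on an open
neighbourhood of `f_j`.  Then every continuous complex function `x` on `E¹` may be
written `x(e) = x₀(e) + Σ_j t_j(e)·b_j(s(e))`, where the `b_j` are continuous on `E⁰`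
and `x₀` is continuous and vanishes on an open neighbourhood of `s⁻¹(v)`. -/
theorem decompose_along_fiber
    {E0 E1 : Type*} [TopologicalSpace E0] [TopologicalSpace E1]
    [CompactSpace E0] [CompactSpace E1] [T2Space E0] [T2Space E1]
    (r s : E1 → E0) (hr : Continuous r) (hs : IsLocalHomeomorph s)
    (v : E0) (q : ℕ) (f : Fin q → E1) (hfinj : Function.Injective f)
    (hfiber : s ⁻¹' {v} = Set.range f)
    (V : Fin q → Set E1) (hVo : ∀ j, IsOpen (V j))
    (hVd : ∀ j j', j ≠ j' → Disjoint (V j) (V j'))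
    (hfV : ∀ j, f j ∈ V j)
    (hVhomeo : ∀ j, ∃ W : Set E0, IsOpen W ∧ MapsHomeoOn s (V j) W)
    (t : Fin q → E1 → ℂ) (htc : ∀ j, Continuous (t j))
    (htsupp : ∀ j, tsupport (t j) ⊆ V j)
    (htone : ∀ j, ∃ N : Set E1, IsOpen N ∧ f j ∈ N ∧ ∀ e ∈ N, t j e = 1)
    (x : E1 → ℂ) (hx : Continuous x) :
    ∃ (b : Fin q → E0 → ℂ) (x₀ : E1 → ℂ),
      (∀ j, Continuous (b j)) ∧ Continuous x₀ ∧
      (∃ N : Set E1, IsOpen N ∧ s ⁻¹' {v} ⊆ N ∧ ∀ e ∈ N, x₀ e = 0) ∧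
      ∀ e : E1, x e = x₀ e + ∑ j, t j e * b j (s e) := by
  classical
  choose W hWo hWh using hVhomeo
  choose ee hsrc htgt heq using hWh
  choose N hNo hfN htN using htone
  -- s (f j) = v
  have hsf : ∀ j, s (f j) = v := by
    intro j
    have : f j ∈ s ⁻¹' {v} := by rw [hfiber]; exact ⟨j, rfl⟩
    simpa using this
  have hvW : ∀ j, v ∈ W j := by
    intro j
    have := heq j (hfV j)
    rw [← htgt j]
    rw [hsf j] at this
    rw [this]
    exact (ee j).map_source (by rw [hsrc j]; exact hfV j)
  -- a closed neighborhood of v inside W j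
  have hC : ∀ j, ∃ C : Set E0, C ∈ nhds v ∧ IsClosed C ∧ C ⊆ W j := by
    intro j
    exact exists_mem_nhds_isClosed_subset ((hWo j).mem_nhds (hvW j))
  choose C hCmem hCcl hCW using hC
  -- Urysohn: φ j = 1 on C j, tsupport φ j ⊆ W j
  have hφ : ∀ j, ∃ φ : C(E0, ℝ), tsupport φ ⊆ W j ∧ Set.EqOn φ 1 (C j) := by
    intro j
    obtain ⟨φ, h1, h2, _⟩ := exists_tsupport_one_of_isOpen_isClosed (hWo j)
      (isClosed_closure.isCompact) (hCcl j) (hCW j)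
    exact ⟨φ, h1, h2⟩
  choose φ hφsupp hφone using hφ
  -- define b j
  set b : Fin q → E0 → ℂ := fun j w => (φ j w : ℂ) * x ((ee j).symm w) with hb
  have hbc : ∀ j, Continuous (b j) := by
    intro j
    rw [continuous_iff_continuousAt]
    intro w
    by_cases hw : w ∈ W j
    · have : ContinuousOn (b j) (W j) := by
        apply ContinuousOn.mul
        · exact (Complex.continuous_ofReal.comp (φ j).continuous).continuousOn
          |>.congr fun y _ => rfl
        · apply hx.comp_continuousOn
          have := (ee j).symm.continuousOn
          rwa [PartialHomeomorph.symm_source, htgt j] at this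
      exact this.continuousAt ((hWo j).mem_nhds hw)
    · have hw' : w ∈ (tsupport (φ j))ᶜ := fun h => hw (hφsupp j h)
      have : ∀ᶠ y in nhds w, b j y = 0 := by
        filter_upwards [(isClosed_tsupport (φ j)).isOpen_compl.mem_nhds hw'] with y hy
        have : φ j y = 0 := image_eq_zero_of_notMem_tsupport hy
        simp [hb, this]
      have h0 : b j w = 0 := by
        have : φ j w = 0 := image_eq_zero_of_notMem_tsupport hw'
        simp [hb, this]
      rw [ContinuousAt, h0]
      exact Filter.Tendsto.congr' (Filter.EventuallyEq.symm this) tendsto_const_nhds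
  -- define x₀
  set x₀ : E1 → ℂ := fun e => x e - ∑ j, t j e * b j (s e) with hx₀
  have hx₀c : Continuous x₀ := by
    apply hx.sub
    apply continuous_finset_sum
    intro j _
    exact (htc j).mul ((hbc j).comp (hs.continuous))
  refine ⟨b, x₀, hbc, hx₀c, ?_, fun e => by simp [hx₀]⟩
  -- the neighborhood N' j of f j on which x₀ vanishes
  set N' : Fin q → Set E1 := fun j => V j ∩ N j ∩ s ⁻¹' (interior (C j)) with hN'
  have hN'o : ∀ j, IsOpen (N' j) :=
    fun j => (((hVo j).inter (hNo j)).inter (isOpen_interior.preimage hs.continuous))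
  refine ⟨⋃ j, N' j, isOpen_iUnion hN'o, ?_, ?_⟩
  · rw [hfiber]
    rintro _ ⟨j, rfl⟩
    refine Set.mem_iUnion.2 ⟨j, ⟨hfV j, hfN j⟩, ?_⟩
    show s (f j) ∈ interior (C j)
    rw [hsf j]
    exact mem_interior_iff_mem_nhds.2 (hCmem j)
  · rintro e he
    obtain ⟨j, ⟨heV, heN⟩, heC⟩ := Set.mem_iUnion.1 he
    have hkey : ∀ j', t j' e * b j' (s e) = if j' = j then x e else 0 := by
      intro j'
      by_cases hj : j' = j
      · subst hj
        rw [htN j' e heN, one_mul, if_pos rfl]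
        have hse : s e ∈ C j' := interior_subset heC
        have h1 : (φ j' (s e) : ℂ) = 1 := by
          rw [hφone j' hse]; simp
        have h2 : (ee j').symm (s e) = e := by
          have hse' : s e = ee j' e := heq j' heV
          rw [hse']
          exact (ee j').left_inv (by rw [hsrc j']; exact heV)
        simp [hb, h1, h2]
      · have : t j' e = 0 := by
          by_contra h
          have : e ∈ tsupport (t j') := subset_tsupport _ h
          exact (hVd j' j hj).ne_of_mem (htsupp j' this) heV rfl
        simp [this, hj]
    have : x₀ e = x e - ∑ j', if j' = j then x e else 0 := by
      simp only [hx₀]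
      congr 1
      exact Finset.sum_congr rfl fun j' _ => hkey j'
    rw [this, Finset.sum_ite_eq' _ j, if_pos (Finset.mem_univ j), sub_self]
end
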